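/- Let Γ ⊂ ℝⁿ be a rational lattice, i.e., a free ℤ-module of rank n spanning ℝⁿ such that ⟨γ,γ'⟩ ∈ ℚ for all γ, γ' ∈ Γ. Then every coincidence isometry of Γ is a product of at most n reflections ρ_γ with γ ∈ Γ \ {0}, each of which is itself a coincidence isometry of Γ. -/

import Mathlib

open Matrix

/-- Two additive subgroups of `ℝⁿ` are commensurate if their intersection has
finite index in both. -/
def Commensurate {n : ℕ} (Γ Γ' : AddSubgroup (Fin n → ℝ)) : Prop :=
  (Γ'.addSubgroupOf Γ).index ≠ 0 ∧ (Γ.addSubgroupOf Γ').index ≠ 0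

/-- The matrix of the reflection `ρ_γ : x ↦ x - 2(⟨x,γ⟩/⟨γ,γ⟩)γ` along `γ`. -/
noncomputable def reflMatrix {n : ℕ} (γ : Fin n → ℝ) : Matrix (Fin n) (Fin n) ℝ :=
  1 - (2 / dotProduct γ γ) • Matrix.vecMulVec γ γ

/-- `Q` (acting on `ℝⁿ` by `x ↦ Q.mulVec x`) is a coincidence isometry of `Γ`:
it is orthogonal and `Γ` is commensurate with its image `Q(Γ)`. -/
def IsCoincidenceIsometry {n : ℕ} (Γ : AddSubgroup (Fin n → ℝ))
    (Q : Matrix (Fin n) (Fin n) ℝ) : Prop :=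
  Q ∈ Matrix.orthogonalGroup (Fin n) ℝ ∧
    Commensurate Γ (Γ.map Q.mulVecLin.toAddMonoidHom)

/-- `Q` is a product of at most `n` reflections along non-zero elements of `Γ`. -/
def IsProdOfAtMostNCoincReflections {n : ℕ} (Γ : AddSubgroup (Fin n → ℝ))
    (Q : Matrix (Fin n) (Fin n) ℝ) : Prop :=
  ∃ k : ℕ, k ≤ n ∧ ∃ g : Fin k → (Fin n → ℝ), (∀ i, g i ∈ Γ ∧ g i ≠ 0) ∧
    Q = (List.ofFn fun i => reflMatrix (g i)).prod

/-- `b` is an `S`-basis of `Γ` which is also an `ℝ`-basis of `ℝⁿ`; i.e. `Γ` is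
a free `S`-module of rank `n` spanning `ℝⁿ` with basis `b`. -/
def IsSBasisOf {n : ℕ} (S : Subring ℝ) (b : Fin n → (Fin n → ℝ))
    (Γ : AddSubgroup (Fin n → ℝ)) : Prop :=
  LinearIndependent ℝ b ∧ Submodule.span ℝ (Set.range b) = ⊤ ∧
    ∀ x, x ∈ Γ ↔ ∃ c : Fin n → ℝ, (∀ i, c i ∈ S) ∧ x = ∑ i, c i • b i

/-!
Cartan–Dieudonné with lattice vectors. Let `Q` be orthogonal with `Q(Γ) ⊆ ℚΓ`. If `Q` moves some
`γ ∈ Γ`, a multiple `u` of `γ` has `u, Q u ∈ Γ`; the reflection along `u - Q u ∈ Γ` sends `Q u`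
to `u` and fixes the fixed space of `Q` pointwise, so composing with it strictly enlarges the fixed
space, and induction on its codimension writes `Q` as a product of at most `n` such reflections.

Each reflection `ρ` along a lattice vector is a coincidence isometry: rational inner products give
`ρ(Γ) ⊆ ℚΓ`, and as `ρ` is an involution, `Γ / (Γ ∩ ρΓ)` and `ρΓ / (Γ ∩ ρΓ)` are finitely
generated torsion groups, hence finite.
-/

variable {n : ℕ}

lemma reflMatrix_mulVec (v x : Fin n → ℝ) :
    reflMatrix v *ᵥ x = x - (2 * (v ⬝ᵥ x) / (v ⬝ᵥ v)) • v := by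
  rw [reflMatrix, sub_mulVec, one_mulVec, smul_mulVec, vecMulVec_mulVec, op_smul_eq_smul,
    smul_smul, div_mul_eq_mul_div]

lemma reflMatrix_mulVec_of_dotProduct_eq_zero {v x : Fin n → ℝ} (h : v ⬝ᵥ x = 0) :
    reflMatrix v *ᵥ x = x := by
  simp [reflMatrix_mulVec, h]

lemma reflMatrix_sub_mulVec {u w : Fin n → ℝ} (h : u ⬝ᵥ u = w ⬝ᵥ w) :
    reflMatrix (u - w) *ᵥ w = u := by
  rcases eq_or_ne u w with rfl | huw
  · simp [reflMatrix]
  have hd : (u - w) ⬝ᵥ (u - w) = -2 * ((u - w) ⬝ᵥ w) := by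
    simp only [sub_dotProduct, dotProduct_sub, h, dotProduct_comm w u]; ring
  have hd0 : (u - w) ⬝ᵥ (u - w) ≠ 0 := fun h0 =>
    huw (sub_eq_zero.mp (dotProduct_self_eq_zero.mp h0))
  have hc : 2 * ((u - w) ⬝ᵥ w) / ((u - w) ⬝ᵥ (u - w)) = -1 := by
    rw [div_eq_iff hd0, hd]; ring
  rw [reflMatrix_mulVec, hc]
  module

lemma reflMatrix_mul_self (v : Fin n → ℝ) : reflMatrix v * reflMatrix v = 1 := by
  have key : (2 / (v ⬝ᵥ v)) ^ 2 * (v ⬝ᵥ v) = 2 * (2 / (v ⬝ᵥ v)) := by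
    rcases eq_or_ne (v ⬝ᵥ v) 0 with h | h
    · simp [h] -- `2 / 0 = 0`, so `reflMatrix 0 = 1`
    · field_simp
  simp only [reflMatrix, sub_mul, mul_sub, one_mul, mul_one, smul_mul_smul,
    vecMulVec_mul_vecMulVec]
  rw [vecMulVec_smul, smul_smul, ← sq, key]
  module

lemma reflMatrix_transpose (v : Fin n → ℝ) : (reflMatrix v)ᵀ = reflMatrix v := by
  simp [reflMatrix, transpose_sub, transpose_smul]

lemma reflMatrix_mem_orthogonalGroup (v : Fin n → ℝ) :
    reflMatrix v ∈ orthogonalGroup (Fin n) ℝ := by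
  rw [mem_orthogonalGroup_iff, reflMatrix_transpose, reflMatrix_mul_self]

lemma dotProduct_mulVec_mulVec_of_mem_orthogonalGroup {ι : Type*} [Fintype ι] [DecidableEq ι]
    {Q : Matrix ι ι ℝ} (hQ : Q ∈ orthogonalGroup ι ℝ) (x y : ι → ℝ) :
    (Q *ᵥ x) ⬝ᵥ (Q *ᵥ y) = x ⬝ᵥ y := by
  rw [← vecMul_transpose, ← dotProduct_mulVec, mulVec_mulVec,
    (mem_orthogonalGroup_iff' ι ℝ).1 hQ, one_mulVec]

noncomputable def fixedSubspace (Q : Matrix (Fin n) (Fin n) ℝ) : Submodule ℝ (Fin n → ℝ) :=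
  LinearMap.eqLocus Q.mulVecLin LinearMap.id

lemma mem_fixedSubspace {Q : Matrix (Fin n) (Fin n) ℝ} {x : Fin n → ℝ} :
    x ∈ fixedSubspace Q ↔ Q *ᵥ x = x :=
  Iff.rfl

lemma fixedSubspace_eq_top_iff {Q : Matrix (Fin n) (Fin n) ℝ} : fixedSubspace Q = ⊤ ↔ Q = 1 := by
  rw [fixedSubspace, LinearMap.eqLocus_eq_top, ← Matrix.toLin'_one]
  exact Matrix.toLin'.injective.eq_iff

lemma fixedSubspace_lt_fixedSubspace_reflMatrix_mul {Q : Matrix (Fin n) (Fin n) ℝ}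
    (hQ : Q ∈ orthogonalGroup (Fin n) ℝ) {u : Fin n → ℝ} (hu : Q *ᵥ u ≠ u) :
    fixedSubspace Q < fixedSubspace (reflMatrix (u - Q *ᵥ u) * Q) := by
  have hQu : reflMatrix (u - Q *ᵥ u) *ᵥ (Q *ᵥ u) = u :=
    reflMatrix_sub_mulVec (dotProduct_mulVec_mulVec_of_mem_orthogonalGroup hQ u u).symm
  refine SetLike.lt_iff_le_and_exists.2 ⟨fun x hx => ?_, u, ?_, hu⟩
  · rw [mem_fixedSubspace] at hx ⊢
    have hux : (u - Q *ᵥ u) ⬝ᵥ x = 0 := by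
      have := dotProduct_mulVec_mulVec_of_mem_orthogonalGroup hQ u x
      rw [hx] at this
      rw [sub_dotProduct, this, sub_self]
    rw [← mulVec_mulVec, hx, reflMatrix_mulVec_of_dotProduct_eq_zero hux]
  · rw [mem_fixedSubspace, ← mulVec_mulVec, hQu]

theorem AddSubgroup.index_addSubgroupOf_ne_zero_of_forall_nsmul_mem {G : Type*} [AddCommGroup G]
    {H K : AddSubgroup G} [AddGroup.FG K] (h : ∀ x ∈ K, ∃ m : ℕ, m ≠ 0 ∧ m • x ∈ H) :
    (H.addSubgroupOf K).index ≠ 0 := by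
  have : Finite (K ⧸ H.addSubgroupOf K) := by
    refine AddCommGroup.finite_of_fg_isAddTorsion _ fun q => ?_
    induction q using QuotientAddGroup.induction_on with
    | H x =>
      obtain ⟨m, hm, hmx⟩ := h x x.2
      refine isOfFinAddOrder_iff_nsmul_eq_zero.2 ⟨m, Nat.pos_of_ne_zero hm, ?_⟩
      rw [← QuotientAddGroup.mk_nsmul, QuotientAddGroup.eq_zero_iff]
      exact hmx
  exact AddSubgroup.index_ne_zero_of_finite

/-- `Q(Γ) ⊆ ℚΓ`. -/
def MapsIntoRationalSpan (Γ : AddSubgroup (Fin n → ℝ)) (Q : Matrix (Fin n) (Fin n) ℝ) : Prop :=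
  ∀ γ ∈ Γ, ∃ m : ℕ, m ≠ 0 ∧ m • (Q *ᵥ γ) ∈ Γ

lemma MapsIntoRationalSpan.mul {Γ : AddSubgroup (Fin n → ℝ)} {P Q : Matrix (Fin n) (Fin n) ℝ}
    (hP : MapsIntoRationalSpan Γ P) (hQ : MapsIntoRationalSpan Γ Q) :
    MapsIntoRationalSpan Γ (P * Q) := by
  intro γ hγ
  obtain ⟨m, hm, hmγ⟩ := hQ γ hγ
  obtain ⟨l, hl, hlγ⟩ := hP _ hmγ
  refine ⟨l * m, mul_ne_zero hl hm, ?_⟩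
  rwa [← mulVec_mulVec, mul_smul, ← mulVec_smul]

lemma IsCoincidenceIsometry.mapsIntoRationalSpan {Γ : AddSubgroup (Fin n → ℝ)}
    {Q : Matrix (Fin n) (Fin n) ℝ} (hQ : IsCoincidenceIsometry Γ Q) : MapsIntoRationalSpan Γ Q :=
  fun γ hγ => ⟨_, hQ.2.2, Γ.nsmul_relIndex_mem ⟨γ, hγ, rfl⟩⟩

lemma mapsIntoRationalSpan_reflMatrix {Γ : AddSubgroup (Fin n → ℝ)}
    (hrat : ∀ γ ∈ Γ, ∀ γ' ∈ Γ, ∃ q : ℚ, γ ⬝ᵥ γ' = q) {v : Fin n → ℝ} (hv : v ∈ Γ) :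
    MapsIntoRationalSpan Γ (reflMatrix v) := by
  intro x hx
  obtain ⟨p, hp⟩ := hrat v hv x hx
  obtain ⟨q, hq⟩ := hrat v hv v hv
  set r : ℚ := 2 * p / q
  refine ⟨r.den, r.den_nz, ?_⟩
  have hr : (r.den : ℝ) * (2 * (v ⬝ᵥ x) / (v ⬝ᵥ v)) = r.num := by
    rw [hp, hq]; exact_mod_cast r.den_mul_eq_num
  rw [reflMatrix_mulVec, ← Nat.cast_smul_eq_nsmul ℝ, smul_sub, smul_smul, hr,
    Nat.cast_smul_eq_nsmul, Int.cast_smul_eq_zsmul]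
  exact sub_mem (Γ.nsmul_mem hx _) (Γ.zsmul_mem hv _)

lemma commensurate_map_of_mul_self_eq_one {Γ : AddSubgroup (Fin n → ℝ)} [AddGroup.FG Γ]
    {Q : Matrix (Fin n) (Fin n) ℝ} (hQ : Q * Q = 1) (hΓQ : MapsIntoRationalSpan Γ Q) :
    Commensurate Γ (Γ.map Q.mulVecLin.toAddMonoidHom) := by
  have : AddGroup.FG (Γ.map Q.mulVecLin.toAddMonoidHom) := by
    rw [← AddSubgroup.range_subtype Γ, AddMonoidHom.map_range]
    infer_instance
  constructor
  · refine AddSubgroup.index_addSubgroupOf_ne_zero_of_forall_nsmul_mem fun x hx => ?_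
    obtain ⟨m, hm, hmx⟩ := hΓQ x hx
    refine ⟨m, hm, ⟨_, hmx, ?_⟩⟩
    show Q *ᵥ (m • Q *ᵥ x) = m • x
    rw [mulVec_smul, mulVec_mulVec, hQ, one_mulVec]
  · refine AddSubgroup.index_addSubgroupOf_ne_zero_of_forall_nsmul_mem ?_
    rintro _ ⟨x, hx, rfl⟩
    exact hΓQ x hx

lemma isCoincidenceIsometry_reflMatrix {Γ : AddSubgroup (Fin n → ℝ)} [AddGroup.FG Γ]
    (hrat : ∀ γ ∈ Γ, ∀ γ' ∈ Γ, ∃ q : ℚ, γ ⬝ᵥ γ' = q) {v : Fin n → ℝ} (hv : v ∈ Γ) :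
    IsCoincidenceIsometry Γ (reflMatrix v) :=
  ⟨reflMatrix_mem_orthogonalGroup v,
    commensurate_map_of_mul_self_eq_one (reflMatrix_mul_self v)
      (mapsIntoRationalSpan_reflMatrix hrat hv)⟩

lemma exists_mem_fixedSubspace_lt_reflMatrix_mul {Γ : AddSubgroup (Fin n → ℝ)}
    (hspan : Submodule.span ℝ (Γ : Set (Fin n → ℝ)) = ⊤) {Q : Matrix (Fin n) (Fin n) ℝ}
    (hQ : Q ∈ orthogonalGroup (Fin n) ℝ) (hΓQ : MapsIntoRationalSpan Γ Q) (hQ1 : Q ≠ 1) :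
    ∃ v ∈ Γ, v ≠ 0 ∧ fixedSubspace Q < fixedSubspace (reflMatrix v * Q) := by
  obtain ⟨γ, hγ, hQγ⟩ : ∃ γ ∈ Γ, Q *ᵥ γ ≠ γ := by
    by_contra! h
    refine hQ1 (fixedSubspace_eq_top_iff.1 (eq_top_mono ?_ hspan))
    exact Submodule.span_le.2 fun γ hγ => mem_fixedSubspace.2 (h γ hγ)
  -- Scale `γ` so that both `u` and `Q u` lie in `Γ`.
  obtain ⟨m, hm, hmγ⟩ := hΓQ γ hγ
  set u := m • γ
  have hQu : Q *ᵥ u ≠ u := by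
    rw [mulVec_smul]
    exact fun h => hQγ (smul_right_injective _ hm h)
  refine ⟨u - Q *ᵥ u, sub_mem (Γ.nsmul_mem hγ m) ?_, sub_ne_zero.2 hQu.symm,
    fixedSubspace_lt_fixedSubspace_reflMatrix_mul hQ hQu⟩
  rwa [mulVec_smul]

lemma exists_prod_reflMatrix_of_le_add_finrank {Γ : AddSubgroup (Fin n → ℝ)}
    (hspan : Submodule.span ℝ (Γ : Set (Fin n → ℝ)) = ⊤)
    (hrat : ∀ γ ∈ Γ, ∀ γ' ∈ Γ, ∃ q : ℚ, γ ⬝ᵥ γ' = q) (d : ℕ) {Q : Matrix (Fin n) (Fin n) ℝ}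
    (hQ : Q ∈ orthogonalGroup (Fin n) ℝ) (hΓQ : MapsIntoRationalSpan Γ Q)
    (hd : n ≤ d + Module.finrank ℝ (fixedSubspace Q)) :
    ∃ k ≤ d, ∃ g : Fin k → (Fin n → ℝ), (∀ i, g i ∈ Γ ∧ g i ≠ 0) ∧
      Q = (List.ofFn fun i => reflMatrix (g i)).prod := by
  induction d generalizing Q with
  | zero =>
    have htop : fixedSubspace Q = ⊤ := by
      refine Submodule.eq_top_of_finrank_eq (le_antisymm (Submodule.finrank_le _) ?_)
      simpa using hd
    exact ⟨0, le_rfl, fun i => i.elim0, fun i => i.elim0, by simp [fixedSubspace_eq_top_iff.1 htop]⟩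
  | succ d ih =>
    by_cases hQ1 : Q = 1
    · exact ⟨0, d.succ.zero_le, fun i => i.elim0, fun i => i.elim0, by simp [hQ1]⟩
    obtain ⟨v, hv, hv0, hlt⟩ := exists_mem_fixedSubspace_lt_reflMatrix_mul hspan hQ hΓQ hQ1
    have hrank := Submodule.finrank_lt_finrank_of_lt hlt
    obtain ⟨k, hk, g, hg, hprod⟩ := ih (mul_mem (reflMatrix_mem_orthogonalGroup v) hQ)
      ((mapsIntoRationalSpan_reflMatrix hrat hv).mul hΓQ) (by omega)
    refine ⟨k + 1, by omega, Fin.cons v g, Fin.cases ⟨hv, hv0⟩ hg, ?_⟩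
    rw [List.ofFn_succ, List.prod_cons, Fin.cons_zero]
    simp only [Fin.cons_succ]
    rw [← hprod, ← mul_assoc, reflMatrix_mul_self, one_mul]

theorem stmt19_general {n : ℕ} (Γ : AddSubgroup (Fin n → ℝ)) (b : Fin n → (Fin n → ℝ))
    (hb₂ : Submodule.span ℝ (Set.range b) = ⊤)
    (hΓ : ∀ x, x ∈ Γ ↔ ∃ c : Fin n → ℤ, x = ∑ i, (c i : ℝ) • b i)
    (hrat : ∀ γ ∈ Γ, ∀ γ' ∈ Γ, ∃ q : ℚ, dotProduct γ γ' = (q : ℝ)) :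
    ∀ Q : Matrix (Fin n) (Fin n) ℝ, IsCoincidenceIsometry Γ Q →
      ∃ k : ℕ, k ≤ n ∧ ∃ g : Fin k → (Fin n → ℝ), (∀ i, g i ∈ Γ ∧ g i ≠ 0) ∧
        (∀ i, IsCoincidenceIsometry Γ (reflMatrix (g i))) ∧
        Q = (List.ofFn fun i => reflMatrix (g i)).prod := by
  intro Q hQ
  obtain rfl : Γ = AddSubgroup.closure (Set.range b) := by
    ext x
    simp only [hΓ, AddSubgroup.mem_closure_range_iff_of_fintype, Int.cast_smul_eq_zsmul]
  have hspan : Submodule.span ℝ (AddSubgroup.closure (Set.range b) : Set (Fin n → ℝ)) = ⊤ :=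
    eq_top_mono (Submodule.span_mono AddSubgroup.subset_closure) hb₂
  obtain ⟨k, hk, g, hg, hprod⟩ := exists_prod_reflMatrix_of_le_add_finrank hspan hrat n hQ.1
    hQ.mapsIntoRationalSpan (Nat.le_add_right _ _)
  exact ⟨k, hk, g, hg, fun i => isCoincidenceIsometry_reflMatrix hrat (hg i).1, hprod⟩

theorem stmt19 {n : ℕ} (Γ : AddSubgroup (Fin n → ℝ)) (b : Fin n → (Fin n → ℝ))
    (hb₁ : LinearIndependent ℝ b) (hb₂ : Submodule.span ℝ (Set.range b) = ⊤)
    (hΓ : ∀ x, x ∈ Γ ↔ ∃ c : Fin n → ℤ, x = ∑ i, (c i : ℝ) • b i)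
    (hrat : ∀ γ ∈ Γ, ∀ γ' ∈ Γ, ∃ q : ℚ, dotProduct γ γ' = (q : ℝ)) :
    ∀ Q : Matrix (Fin n) (Fin n) ℝ, IsCoincidenceIsometry Γ Q →
      ∃ k : ℕ, k ≤ n ∧ ∃ g : Fin k → (Fin n → ℝ), (∀ i, g i ∈ Γ ∧ g i ≠ 0) ∧
        (∀ i, IsCoincidenceIsometry Γ (reflMatrix (g i))) ∧
        Q = (List.ofFn fun i => reflMatrix (g i)).prod :=
  stmt19_general Γ b hb₂ hΓ hrat
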